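/- Let V : [a,b] → ℝ be differentiable with derivative V′ satisfying ∫_a^b |V′(x)|⁴ dx < ∞. There exists a constant C > 0, depending only on b−a and ‖V′‖_{L⁴(Ω)}, such that for every 0 < τ < 1, every positive even integer N, and every trigonometric polynomial W ∈ X_N, one has ‖ e^{−iτV} W ‖_{H¹(Ω)} ≤ (1 + Cτ) ‖ W ‖_{H¹(Ω)}. -/

import Mathlib

open MeasureTheory
open scoped Real

noncomputable section

namespace GPE

/-- Frequencies μ_l = 2πl/(b−a). -/
def freq (a b : ℝ) (l : ℤ) : ℝ := 2 * Real.pi * l / (b - a)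

/-- The Fourier mode e^{iμ_l(x−a)}. -/
def eMode (a b : ℝ) (l : ℤ) (x : ℝ) : ℂ :=
  Complex.exp (Complex.I * ((freq a b l * (x - a) : ℝ) : ℂ))

/-- Index set 𝒯_N = {−N/2, …, N/2 − 1}. -/
def idxSet (N : ℕ) : Finset ℤ := Finset.Ico (-(N : ℤ) / 2) ((N : ℤ) / 2)

/-- l-th Fourier coefficient û_l = (1/(b−a)) ∫_a^b u(x) e^{−iμ_l(x−a)} dx. -/
def fourierCoeffOn (a b : ℝ) (u : ℝ → ℂ) (l : ℤ) : ℂ :=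
  ((b - a : ℝ) : ℂ)⁻¹ *
    ∫ x in a..b, u x * Complex.exp (-(Complex.I * ((freq a b l * (x - a) : ℝ) : ℂ)))

/-- L²-projection P_N u = Σ_{l∈𝒯_N} û_l e^{iμ_l(x−a)}. -/
def projN (a b : ℝ) (N : ℕ) (u : ℝ → ℂ) : ℝ → ℂ :=
  fun x => ∑ l ∈ idxSet N, fourierCoeffOn a b u l * eMode a b l x

/-- Grid points x_j = a + j(b−a)/N. -/
def gridPt (a b : ℝ) (N : ℕ) (j : ℕ) : ℝ := a + j * ((b - a) / N)

/-- Discrete Fourier coefficient ṽ_l = (1/N) Σ_{j=0}^{N−1} v(x_j) e^{−iμ_l(x_j−a)}. -/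
def discreteCoeff (a b : ℝ) (N : ℕ) (v : ℝ → ℂ) (l : ℤ) : ℂ :=
  (N : ℂ)⁻¹ * ∑ j ∈ Finset.range N,
    v (gridPt a b N j) * Complex.exp (-(Complex.I * ((freq a b l * (gridPt a b N j - a) : ℝ) : ℂ)))

/-- Trigonometric interpolation I_N v = Σ_{l∈𝒯_N} ṽ_l e^{iμ_l(x−a)}. -/
def interpN (a b : ℝ) (N : ℕ) (v : ℝ → ℂ) : ℝ → ℂ :=
  fun x => ∑ l ∈ idxSet N, discreteCoeff a b N v l * eMode a b l x

/-- The free Schrödinger flow composed with projection: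
 e^{isΔ} P_N u = Σ_{l∈𝒯_N} e^{−isμ_l²} û_l e^{iμ_l(x−a)}. -/
def freeFlow (a b : ℝ) (N : ℕ) (s : ℝ) (u : ℝ → ℂ) : ℝ → ℂ :=
  fun x => ∑ l ∈ idxSet N,
    Complex.exp (-(Complex.I * ((s * freq a b l ^ 2 : ℝ) : ℂ))) * fourierCoeffOn a b u l *
      eMode a b l x

/-- Membership in X_N = span{e^{iμ_l(x−a)} : l ∈ 𝒯_N}. -/
def MemXN (a b : ℝ) (N : ℕ) (φ : ℝ → ℂ) : Prop :=
  ∃ c : ℤ → ℂ, φ = fun x => ∑ l ∈ idxSet N, c l * eMode a b l x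

/-- The nonlinear-phase map φ ↦ φ e^{−iτβ|φ|²}. -/
def nlPhase (β τ : ℝ) (φ : ℝ → ℂ) : ℝ → ℂ :=
  fun x => φ x * Complex.exp (-(Complex.I * ((τ * β * ‖φ x‖ ^ 2 : ℝ) : ℂ)))

/-- The LTeFP numerical flow Φ_τ(φ) = e^{iτΔ} P_N( e^{−iτV} · I_N( φ e^{−iτβ|φ|²} ) ). -/
def PhiLTeFP (a b : ℝ) (N : ℕ) (V : ℝ → ℝ) (β τ : ℝ) (φ : ℝ → ℂ) : ℝ → ℂ :=
  freeFlow a b N τ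
    (fun x => Complex.exp (-(Complex.I * ((τ * V x : ℝ) : ℂ))) * interpN a b N (nlPhase β τ φ) x)

/-- The LTFS numerical flow S_τ(φ) = e^{iτΔ} P_N( e^{−iτ(V+β|φ|²)} φ ). -/
def SLTFS (a b : ℝ) (N : ℕ) (V : ℝ → ℝ) (β τ : ℝ) (φ : ℝ → ℂ) : ℝ → ℂ :=
  freeFlow a b N τ
    (fun x =>
      Complex.exp (-(Complex.I * ((τ * (V x + β * ‖φ x‖ ^ 2) : ℝ) : ℂ))) * φ x)

/-- The STeFP numerical flow: φ ↦ e^{i(τ/2)Δ} P_N( e^{−iτV} · I_N( φ₁ e^{−iτβ|φ₁|²} ) )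
with φ₁ = e^{i(τ/2)Δ} φ. -/
def PhiSTeFP (a b : ℝ) (N : ℕ) (V : ℝ → ℝ) (β τ : ℝ) (φ : ℝ → ℂ) : ℝ → ℂ :=
  freeFlow a b N (τ / 2)
    (fun x => Complex.exp (-(Complex.I * ((τ * V x : ℝ) : ℂ))) *
      interpN a b N (nlPhase β τ (freeFlow a b N (τ / 2) φ)) x)

/-- LTeFP iterates: I_N ψ̂⁰ = I_N ψ₀ and I_N ψ̂^{n+1} = Φ_τ(I_N ψ̂ⁿ). -/
def LTeFPiter (a b : ℝ) (N : ℕ) (V : ℝ → ℝ) (β τ : ℝ) (ψ0 : ℝ → ℂ) : ℕ → ℝ → ℂ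
  | 0 => interpN a b N ψ0
  | n + 1 => PhiLTeFP a b N V β τ (LTeFPiter a b N V β τ ψ0 n)

/-- STeFP iterates. -/
def STeFPiter (a b : ℝ) (N : ℕ) (V : ℝ → ℝ) (β τ : ℝ) (ψ0 : ℝ → ℂ) : ℕ → ℝ → ℂ
  | 0 => interpN a b N ψ0
  | n + 1 => PhiSTeFP a b N V β τ (STeFPiter a b N V β τ ψ0 n)

/-- Sobolev H^m norm on (a,b): ‖u‖_{H^m} = (Σ_{k≤m} ‖u^{(k)}‖²_{L²(a,b)})^{1/2}. -/
def sobNorm (a b : ℝ) (m : ℕ) (u : ℝ → ℂ) : ℝ :=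
  Real.sqrt (∑ k ∈ Finset.range (m + 1), ∫ x in a..b, ‖iteratedDeriv k u x‖ ^ 2)

/-- Periodic boundary conditions of order m: u^{(k)}(a) = u^{(k)}(b) for k = 0,…,m−1. -/
def PerBC (a b : ℝ) (m : ℕ) (u : ℝ → ℂ) : Prop :=
  ∀ k < m, iteratedDeriv k u a = iteratedDeriv k u b

/-- ψ (with time derivative ψt) solves the GPE i∂_tψ = −∂_x²ψ + Vψ + β|ψ|²ψ
on [0,T] × [a,b]. -/
def IsGPESolution (a b T : ℝ) (V : ℝ → ℝ) (β : ℝ) (ψ ψt : ℝ → ℝ → ℂ) : Prop :=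
  ∀ t ∈ Set.Icc 0 T, ∀ x ∈ Set.Icc a b,
    HasDerivAt (fun s => ψ s x) (ψt t x) t ∧
    Complex.I * ψt t x =
      -(iteratedDeriv 2 (ψ t) x) + ((V x + β * ‖ψ t x‖ ^ 2 : ℝ) : ℂ) * ψ t x

end GPE

/-! Multiplying by the unimodular factor e^{-iτV} leaves |W| unchanged and turns the derivative
into e^{-iτV}(W' - iτV'W), so pointwise |u'|² ≤ (1 + τ)(|W'|² + τ|V'|²|W|²). The potential term is
bounded by sup|W|² · ∫|V'|², where ∫|V'|² is finite because V' ∈ L⁴ on a bounded interval, and the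
one-dimensional embedding sup|W|² ≤ ((b - a)⁻¹ + 1)‖W‖²_{H¹} follows from the fundamental theorem of
calculus for |W|² started at a point where |W|² is minimal. This gives the estimate with
C = 1 + ((b - a)⁻¹ + 1)‖V'‖²_{L²}. -/

open GPE MeasureTheory Set intervalIntegral

theorem intervalIntegral.integral_mono_on_of_nonneg {a b : ℝ} {f g : ℝ → ℝ} (hab : a ≤ b)
    (hf : ∀ x ∈ Icc a b, 0 ≤ f x) (h : ∀ x ∈ Icc a b, f x ≤ g x)
    (hg : IntervalIntegrable g volume a b) :
    ∫ x in a..b, f x ≤ ∫ x in a..b, g x := by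
  simp only [integral_of_le hab]
  exact setIntegral_mono_of_nonneg (fun x hx => hf x (Ioc_subset_Icc_self hx))
    (fun x hx => h x (Ioc_subset_Icc_self hx)) hg.1

theorem IntervalIntegrable.sq_of_abs_pow_four {a b : ℝ} {f : ℝ → ℝ} (hf : Measurable f)
    (h : IntervalIntegrable (fun x => |f x| ^ 4) volume a b) :
    IntervalIntegrable (fun x => f x ^ 2) volume a b := by
  refine (intervalIntegrable_const (c := (1 : ℝ)) |>.add h).mono_fun
    (hf.pow_const 2).aestronglyMeasurable (Filter.Eventually.of_forall fun x => ?_)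
  dsimp only
  rw [Real.norm_of_nonneg (sq_nonneg _), Real.norm_of_nonneg (by positivity), ← sq_abs]
  nlinarith [sq_nonneg (|f x| ^ 2 - 1)]

theorem add_mul_sq_le {τ : ℝ} (hτ : 0 ≤ τ) (p r : ℝ) :
    (p + τ * r) ^ 2 ≤ (1 + τ) * (p ^ 2 + τ * r ^ 2) := by
  nlinarith [mul_nonneg hτ (sq_nonneg (p - r))]

theorem sqrt_add_le_one_add_mul_sqrt {A B D c τ : ℝ} (hA : 0 ≤ A) (hB : 0 ≤ B) (hc : 0 ≤ c)
    (hτ : 0 ≤ τ) (hD : D ≤ (1 + τ) * (B + τ * c * (A + B))) :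
    √(A + D) ≤ (1 + (1 + c) * τ) * √(A + B) := by
  rw [← Real.sqrt_sq (by positivity : 0 ≤ 1 + (1 + c) * τ), ← Real.sqrt_mul (sq_nonneg _)]
  refine Real.sqrt_le_sqrt ?_
  have hτ2 := mul_nonneg hτ hτ
  have hcτ := mul_nonneg hc hτ
  have hcτ2 := mul_nonneg hc hτ2
  have hc2τ2 := mul_nonneg (mul_nonneg hc hc) hτ2
  nlinarith [mul_nonneg hτ hA, mul_nonneg hτ hB, mul_nonneg hcτ hA, mul_nonneg hcτ hB,
    mul_nonneg hτ2 hA, mul_nonneg hτ2 hB, mul_nonneg hcτ2 hA, mul_nonneg hcτ2 hB,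
    mul_nonneg hc2τ2 hA, mul_nonneg hc2τ2 hB]

theorem Complex.norm_exp_neg_I_mul_ofReal (r : ℝ) : ‖Complex.exp (-(Complex.I * r))‖ = 1 := by
  simp [Complex.norm_exp]

theorem norm_deriv_cexp_neg_I_mul_le {φ : ℝ → ℝ} {W : ℝ → ℂ} {φ' : ℝ} {W' : ℂ} {x : ℝ}
    (hφ : HasDerivAt φ φ' x) (hW : HasDerivAt W W' x) :
    ‖deriv (fun y => Complex.exp (-(Complex.I * φ y)) * W y) x‖ ≤ ‖W'‖ + |φ'| * ‖W x‖ := by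
  rw [((hφ.ofReal_comp.const_mul Complex.I).fun_neg.cexp.fun_mul hW).deriv]
  refine (norm_add_le _ _).trans_eq ?_
  simp only [norm_mul, norm_neg, Complex.norm_exp_neg_I_mul_ofReal, Complex.norm_I,
    Complex.norm_real, Real.norm_eq_abs]
  ring

section SupBound

variable {F : Type*} [NormedAddCommGroup F] [InnerProductSpace ℝ F] {a b : ℝ} {W W' : ℝ → F}

theorem sq_norm_sub_sq_norm_le_integral (hab : a ≤ b)
    (hW : ∀ t ∈ Icc a b, HasDerivAt W (W' t) t) (hW' : ContinuousOn W' (Icc a b))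
    {x y : ℝ} (hx : x ∈ Icc a b) (hy : y ∈ Icc a b) :
    ‖W x‖ ^ 2 - ‖W y‖ ^ 2 ≤ ∫ t in a..b, (‖W t‖ ^ 2 + ‖W' t‖ ^ 2) := by
  have hWc : ContinuousOn W (Icc a b) := fun t ht => (hW t ht).continuousAt.continuousWithinAt
  have hsub : uIcc y x ⊆ Icc a b := uIcc_subset_Icc hy hx
  have hG : ContinuousOn (fun t => 2 * inner ℝ (W t) (W' t)) (Icc a b) :=
    continuousOn_const.mul (hWc.inner hW')
  rw [← integral_eq_sub_of_hasDerivAt (fun t ht => (hW t (hsub ht)).norm_sq)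
    ((hG.mono hsub).intervalIntegrable)]
  have hsubIoc : uIoc y x ⊆ uIoc a b :=
    uIoc_subset_uIoc_of_uIcc_subset_uIcc (by rwa [uIcc_of_le hab])
  calc ∫ t in y..x, 2 * inner ℝ (W t) (W' t)
      ≤ ∫ t in uIoc y x, ‖2 * inner ℝ (W t) (W' t)‖ :=
        (Real.le_norm_self _).trans norm_integral_le_integral_norm_uIoc
    _ ≤ ∫ t in uIoc a b, ‖2 * inner ℝ (W t) (W' t)‖ :=
        setIntegral_mono_set
          (by rw [uIoc_of_le hab]; exact hG.norm.integrableOn_Icc.mono_set Ioc_subset_Icc_self)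
          (Filter.Eventually.of_forall fun _ => norm_nonneg _) hsubIoc.eventuallyLE
    _ ≤ ∫ t in a..b, (‖W t‖ ^ 2 + ‖W' t‖ ^ 2) := by
        rw [uIoc_of_le hab, ← integral_of_le hab]
        refine integral_mono_on hab (hG.norm.intervalIntegrable_of_Icc hab)
          ((hWc.norm.pow 2).add (hW'.norm.pow 2) |>.intervalIntegrable_of_Icc hab) fun t _ => ?_
        rw [norm_mul, Real.norm_two, Real.norm_eq_abs]
        nlinarith [abs_real_inner_le_norm (W t) (W' t), two_mul_le_add_sq ‖W t‖ ‖W' t‖]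

theorem sq_norm_le_integral_of_hasDerivAt (hab : a < b)
    (hW : ∀ t ∈ Icc a b, HasDerivAt W (W' t) t) (hW' : ContinuousOn W' (Icc a b)) :
    ∀ x ∈ Icc a b, ‖W x‖ ^ 2 ≤
      ((b - a)⁻¹ + 1) * ((∫ t in a..b, ‖W t‖ ^ 2) + ∫ t in a..b, ‖W' t‖ ^ 2) := by
  have hWc : ContinuousOn W (Icc a b) := fun t ht => (hW t ht).continuousAt.continuousWithinAt
  have hW2 : IntervalIntegrable (fun t => ‖W t‖ ^ 2) volume a b :=
    (hWc.norm.pow 2).intervalIntegrable_of_Icc hab.le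
  have hW'2 : IntervalIntegrable (fun t => ‖W' t‖ ^ 2) volume a b :=
    (hW'.norm.pow 2).intervalIntegrable_of_Icc hab.le
  rw [← integral_add hW2 hW'2]
  obtain ⟨y, hy, hmin⟩ :=
    isCompact_Icc.exists_isMinOn (nonempty_Icc.mpr hab.le) (hWc.norm.pow 2)
  set S := ∫ t in a..b, (‖W t‖ ^ 2 + ‖W' t‖ ^ 2)
  have hyS : (b - a) * ‖W y‖ ^ 2 ≤ S := by
    have := integral_mono_on (μ := volume) hab.le intervalIntegrable_const (hW2.add hW'2)
      fun t ht => (isMinOn_iff.mp hmin t ht).trans (le_add_of_nonneg_right (sq_nonneg ‖W' t‖))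
    simpa using this
  have hy_le : ‖W y‖ ^ 2 ≤ (b - a)⁻¹ * S := by
    rw [← div_eq_inv_mul, le_div_iff₀ (sub_pos.mpr hab)]
    linarith
  intro x hx
  linarith [sq_norm_sub_sq_norm_le_integral hab.le hW hW' hx hy]

end SupBound

theorem integral_sq_norm_deriv_cexp_mul_le {a b τ Q : ℝ} (hab : a ≤ b) (hτ : 0 ≤ τ)
    {V V' : ℝ → ℝ} (hV : ∀ x ∈ Icc a b, HasDerivAt V (V' x) x)
    (hV' : IntervalIntegrable (fun x => V' x ^ 2) volume a b)
    {W W' : ℝ → ℂ} (hW : ∀ x ∈ Icc a b, HasDerivAt W (W' x) x)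
    (hW' : ContinuousOn W' (Icc a b)) (hQ : ∀ x ∈ Icc a b, ‖W x‖ ^ 2 ≤ Q) :
    ∫ x in a..b, ‖deriv (fun y => Complex.exp (-(Complex.I * ((τ * V y : ℝ) : ℂ))) * W y) x‖ ^ 2
      ≤ (1 + τ) * ((∫ x in a..b, ‖W' x‖ ^ 2) + τ * Q * ∫ x in a..b, V' x ^ 2) := by
  have hW'2 : IntervalIntegrable (fun x => ‖W' x‖ ^ 2) volume a b :=
    (hW'.norm.pow 2).intervalIntegrable_of_Icc hab
  have hbound : ∀ x ∈ Icc a b,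
      ‖deriv (fun y => Complex.exp (-(Complex.I * ((τ * V y : ℝ) : ℂ))) * W y) x‖ ^ 2
        ≤ (1 + τ) * (‖W' x‖ ^ 2 + τ * Q * V' x ^ 2) := by
    intro x hx
    have hderiv := norm_deriv_cexp_neg_I_mul_le ((hV x hx).const_mul τ) (hW x hx)
    rw [abs_mul, abs_of_nonneg hτ, mul_assoc] at hderiv
    have hVW : (|V' x| * ‖W x‖) ^ 2 ≤ Q * V' x ^ 2 := by
      rw [mul_pow, sq_abs, mul_comm Q]
      exact mul_le_mul_of_nonneg_left (hQ x hx) (sq_nonneg _)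
    calc _ ≤ (‖W' x‖ + τ * (|V' x| * ‖W x‖)) ^ 2 := pow_le_pow_left₀ (norm_nonneg _) hderiv 2
      _ ≤ (1 + τ) * (‖W' x‖ ^ 2 + τ * (|V' x| * ‖W x‖) ^ 2) := add_mul_sq_le hτ _ _
      _ ≤ (1 + τ) * (‖W' x‖ ^ 2 + τ * Q * V' x ^ 2) := by rw [mul_assoc τ Q]; gcongr
  refine (integral_mono_on_of_nonneg hab (fun x _ => sq_nonneg _) hbound
    ((hW'2.add (hV'.const_mul (τ * Q))).const_mul (1 + τ))).trans_eq ?_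
  rw [intervalIntegral.integral_const_mul, integral_add hW'2 (hV'.const_mul (τ * Q)),
    intervalIntegral.integral_const_mul]

theorem GPE.contDiff_eMode (a b : ℝ) (l : ℤ) {n : WithTop ℕ∞} : ContDiff ℝ n (eMode a b l) :=
  (contDiff_const.mul (Complex.ofRealCLM.contDiff.comp
    (contDiff_const.mul (contDiff_id.sub contDiff_const)))).cexp

theorem GPE.MemXN.contDiff {a b : ℝ} {N : ℕ} {W : ℝ → ℂ} (hW : MemXN a b N W)
    {n : WithTop ℕ∞} : ContDiff ℝ n W := by
  obtain ⟨c, rfl⟩ := hW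
  exact ContDiff.sum fun l _ => contDiff_const.mul (contDiff_eMode a b l)

theorem GPE.sobNorm_one (a b : ℝ) (u : ℝ → ℂ) :
    sobNorm a b 1 u = √((∫ x in a..b, ‖u x‖ ^ 2) + ∫ x in a..b, ‖deriv u x‖ ^ 2) := by
  simp [sobNorm, Finset.sum_range_succ]

open GPE in
/-- Multiplier estimate: if V is differentiable on [a,b] with ‖V′‖_{L⁴(a,b)} < ∞, then
for all 0 < τ < 1 and all trigonometric polynomials W ∈ X_N,
‖e^{−iτV} W‖_{H¹} ≤ (1 + Cτ)‖W‖_{H¹}, with C depending only on b−a and ‖V′‖_{L⁴}. -/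
theorem multiplier_estimate_H1
    (a b : ℝ) (hab : a < b) (V : ℝ → ℝ)
    (hVd : ∀ x ∈ Set.Icc a b, HasDerivAt V (deriv V x) x)
    (hV'4 : IntervalIntegrable (fun x => |deriv V x| ^ 4) MeasureTheory.volume a b) :
    ∃ C > (0 : ℝ), ∀ τ : ℝ, 0 < τ → τ < 1 →
      ∀ N : ℕ, 0 < N → Even N →
      ∀ W : ℝ → ℂ, MemXN a b N W →
        sobNorm a b 1 (fun x => Complex.exp (-(Complex.I * ((τ * V x : ℝ) : ℂ))) * W x)
          ≤ (1 + C * τ) * sobNorm a b 1 W := by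
  have hM : 0 ≤ ∫ x in a..b, deriv V x ^ 2 := integral_nonneg hab.le fun x _ => sq_nonneg _
  refine ⟨1 + ((b - a)⁻¹ + 1) * ∫ x in a..b, deriv V x ^ 2, by positivity,
    fun τ hτ _ N _ _ W hW => ?_⟩
  have hWc : ContDiff ℝ 1 W := hW.contDiff
  have hWd : ∀ x ∈ Icc a b, HasDerivAt W (deriv W x) x := fun x _ =>
    (hWc.differentiable one_ne_zero x).hasDerivAt
  have hW' : Continuous (deriv W) := hWc.continuous_deriv le_rfl
  have hu := integral_sq_norm_deriv_cexp_mul_le hab.le hτ.le hVd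
    (IntervalIntegrable.sq_of_abs_pow_four (measurable_deriv V) hV'4) hWd hW'.continuousOn
    (sq_norm_le_integral_of_hasDerivAt hab hWd hW'.continuousOn)
  simp only [sobNorm_one, norm_mul, Complex.norm_exp_neg_I_mul_ofReal, one_mul]
  exact sqrt_add_le_one_add_mul_sqrt (integral_nonneg hab.le fun x _ => sq_nonneg _)
    (integral_nonneg hab.le fun x _ => sq_nonneg _) (by positivity) hτ.le (hu.trans_eq (by ring))
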